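/- arXiv:2506.20559 — 2 statements merged into one kernel-verified Lean document; each statement's English description precedes it below -/
import Mathlib

section
/- The complex group algebra ℂ[Γ] is isomorphic as a ℂ-algebra to the product ℂ⁶ × M₂(ℂ)³, i.e. to (Fin 6 → ℂ) × (Fin 3 → Matrix (Fin 2) (Fin 2) ℂ). (Equivalently: Γ has exactly nine irreducible complex representations, of which six are 1-dimensional and three are 2-dimensional.) -/
open MvPolynomial

/-- Substitution of a 2×2 matrix into a polynomial in two variables:
`tᵢ ↦ gᵢ₁ t₁ + gᵢ₂ t₂`. -/
noncomputable def bsub (g : Matrix (Fin 2) (Fin 2) ℂ) (p : MvPolynomial (Fin 2) ℂ) :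
    MvPolynomial (Fin 2) ℂ :=
  aeval (fun i => C (g i 0) * X 0 + C (g i 1) * X 1) p

lemma bsub_one (p : MvPolynomial (Fin 2) ℂ) : bsub 1 p = p := by
  have : (fun i => C ((1 : Matrix (Fin 2) (Fin 2) ℂ) i 0) * X 0
      + C ((1 : Matrix (Fin 2) (Fin 2) ℂ) i 1) * X 1) = (X : Fin 2 → MvPolynomial (Fin 2) ℂ) := by
    funext i
    fin_cases i <;> simp [Matrix.one_apply]
  rw [bsub, this, aeval_X_left_apply]

lemma bsub_mul (g h : Matrix (Fin 2) (Fin 2) ℂ) (p : MvPolynomial (Fin 2) ℂ) :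
    bsub (g * h) p = bsub h (bsub g p) := by
  unfold bsub
  rw [← AlgHom.comp_apply]
  refine DFunLike.congr_fun ?_ p
  apply algHom_ext
  intro i
  simp [Matrix.mul_apply, Fin.sum_univ_two]
  ring

/-- The binary cubic `t₁³ + t₂³`. -/
noncomputable def cubicDiag : MvPolynomial (Fin 2) ℂ := X 0 ^ 3 + X 1 ^ 3

/-- The stabilizer `Γ` of the binary cubic `t₁³ + t₂³` in `GL₂(ℂ)`. -/
noncomputable def Gamma : Subgroup (GL (Fin 2) ℂ) where
  carrier := {g | bsub (↑g) cubicDiag = cubicDiag}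
  one_mem' := bsub_one _
  mul_mem' := by
    intro g h hg hh
    show bsub (↑(g * h)) cubicDiag = cubicDiag
    rw [Units.val_mul, bsub_mul, hg, hh]
  inv_mem' := by
    intro g hg
    show bsub (↑g⁻¹) cubicDiag = cubicDiag
    have hg' : bsub (↑g) cubicDiag = cubicDiag := hg
    have h1 : bsub ((↑g : Matrix (Fin 2) (Fin 2) ℂ) * (↑g⁻¹ : Matrix (Fin 2) (Fin 2) ℂ)) cubicDiag
        = bsub (↑g⁻¹ : Matrix (Fin 2) (Fin 2) ℂ) cubicDiag := by
      rw [bsub_mul, hg']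
    have h2 : (↑g : Matrix (Fin 2) (Fin 2) ℂ) * (↑g⁻¹ : Matrix (Fin 2) (Fin 2) ℂ) = 1 := by
      rw [← Units.val_mul, mul_inv_cancel, Units.val_one]
    rw [← h1, h2, bsub_one]

/-!
`Γ` consists of the diagonal and antidiagonal matrices whose nonzero entries are cube roots of
unity: comparing the coefficients of `t₁²t₂` and `t₁t₂²` and using `det g ≠ 0` shows that
some entry of `g ∈ Γ` vanishes, which forces the monomial shape. With `ω` a primitive cube root of
unity and `ρ` the standard representation of `D₃`, `(c, x) ↦ ω^c ρ(x)` is an isomorphism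
`ℤ/3 × D₃ ≃ Γ`.

Twisting the irreducible representations `1`, `sign`, `ρ` of `D₃` by the three characters of
`ℤ/3` gives six characters and three 2-dimensional representations of `ℤ/3 × D₃`, hence an algebra
map `ℂ[ℤ/3 × D₃] → ℂ⁶ × M₂(ℂ)³`. Its trace form `τ` (the regular trace, normalized by `1/18`)
satisfies `τ(g) = [g = 1]`, because the regular character of `D₃` is `1 + sign + 2 tr ρ` and
the characters of `ℤ/3` sum to `3 [c = 0]`. Hence each coefficient is recovered as
`x_h = τ(h⁻¹ x)`, so the map is injective, and both sides have dimension 18.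
-/

namespace MonoidAlgebra

variable {k G A : Type*} [CommSemiring k] [Group G] [Semiring A] [Algebra k A]

theorem coeff_eq_dual_lift (ρ : G →* A) (τ : A →ₗ[k] k) (hτ₁ : τ 1 = 1)
    (hτ : ∀ g ≠ 1, τ (ρ g) = 0) (x : MonoidAlgebra k G) (h : G) :
    x.coeff h = τ (ρ h⁻¹ * lift k A G ρ x) := by
  classical
  induction x using MonoidAlgebra.induction_linear with
  | zero => simp
  | add x y hx hy => simp [hx, hy, mul_add]
  | single g r =>
    rw [lift_single, mul_smul_comm, map_smul, ← map_mul, coeff_single, Finsupp.single_apply]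
    split_ifs with hgh
    · simp [hgh, hτ₁]
    · rw [hτ _ (by rwa [Ne, inv_mul_eq_one, eq_comm]), smul_zero]

theorem lift_injective_of_dual (ρ : G →* A) (τ : A →ₗ[k] k) (hτ₁ : τ 1 = 1)
    (hτ : ∀ g ≠ 1, τ (ρ g) = 0) : Function.Injective (lift k A G ρ) :=
  fun x y hxy ↦ ext <| Finsupp.ext fun h ↦ by
    rw [coeff_eq_dual_lift ρ τ hτ₁ hτ, hxy, ← coeff_eq_dual_lift ρ τ hτ₁ hτ]

theorem nonempty_algEquiv_of_dual {k G A : Type*} [Field k] [Group G] [Fintype G] [Ring A]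
    [Algebra k A] [FiniteDimensional k A] (ρ : G →* A) (τ : A →ₗ[k] k) (hτ₁ : τ 1 = 1)
    (hτ : ∀ g ≠ 1, τ (ρ g) = 0) (hdim : Module.finrank k A = Fintype.card G) :
    Nonempty (MonoidAlgebra k G ≃ₐ[k] A) := by
  have hdim' : Module.finrank k (MonoidAlgebra k G) = Module.finrank k A := by
    rw [(coeffLinearEquiv k).finrank_eq, Module.finrank_finsupp_self, hdim]
  have hinj := lift_injective_of_dual ρ τ hτ₁ hτ
  exact ⟨.ofBijective (lift k A G ρ) ⟨hinj,
    (LinearMap.injective_iff_surjective_of_finrank_eq_finrank hdim'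
      (f := (lift k A G ρ).toLinearMap)).mp hinj⟩⟩

end MonoidAlgebra

section smulProd

variable {k H K A : Type*} [CommSemiring k] [Semiring A] [Algebra k A] [Monoid H] [Monoid K]

def MonoidHom.smulProd (χ : H →* k) (π : K →* A) : H × K →* A where
  toFun p := χ p.1 • π p.2
  map_one' := by simp
  map_mul' p q := by simp only [Prod.fst_mul, Prod.snd_mul, map_mul, smul_mul_smul_comm]

@[simp]
theorem MonoidHom.smulProd_apply (χ : H →* k) (π : K →* A) (p : H × K) :
    χ.smulProd π p = χ p.1 • π p.2 :=
  rfl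

end smulProd

namespace ZMod

variable {N : ℕ} [NeZero N]

theorem stdAddChar_pow_eq_one (z : ZMod N) : stdAddChar z ^ N = 1 := by
  rw [← AddChar.map_nsmul_eq_pow, nsmul_eq_mul, natCast_self, zero_mul, AddChar.map_zero_eq_one]

theorem exists_stdAddChar_eq {x : ℂ} (hx : x ^ N = 1) : ∃ z : ZMod N, stdAddChar z = x := by
  have hx0 : x ≠ 0 := by rintro rfl; simp [NeZero.ne N] at hx
  obtain ⟨i, -, hi⟩ := (Complex.mem_rootsOfUnity N (Units.mk0 x hx0)).mp <| by
    rw [mem_rootsOfUnity, Units.ext_iff]; simpa using hx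
  refine ⟨i, ?_⟩
  rw [← Int.cast_natCast, stdAddChar_coe]
  simpa [mul_div_assoc] using hi

end ZMod

namespace DihedralGroup

def sign (n : ℕ) : DihedralGroup n →* ℂ where
  toFun
    | r _ => 1
    | sr _ => -1
  map_one' := rfl
  map_mul' x y := by cases x <;> cases y <;> simp

@[simp] lemma sign_r (n : ℕ) (i : ZMod n) : sign n (r i) = 1 := rfl
@[simp] lemma sign_sr (n : ℕ) (i : ZMod n) : sign n (sr i) = -1 := rfl

variable (n : ℕ) [NeZero n]

noncomputable def stdRep : DihedralGroup n →* Matrix (Fin 2) (Fin 2) ℂ where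
  toFun
    | r i => !![ZMod.stdAddChar i, 0; 0, ZMod.stdAddChar (-i)]
    | sr i => !![0, ZMod.stdAddChar (-i); ZMod.stdAddChar i, 0]
  map_one' := by rw [one_def]; simp [Matrix.one_fin_two]
  map_mul' x y := by
    cases x <;> cases y <;> simp [AddChar.map_add_eq_mul, sub_eq_add_neg, mul_comm]

@[simp] lemma stdRep_r (i : ZMod n) :
    stdRep n (r i) = !![ZMod.stdAddChar i, 0; 0, ZMod.stdAddChar (-i)] := rfl
@[simp] lemma stdRep_sr (i : ZMod n) :
    stdRep n (sr i) = !![0, ZMod.stdAddChar (-i); ZMod.stdAddChar i, 0] := rfl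

theorem one_add_sign_add_two_mul_trace_stdRep (x : DihedralGroup 3) :
    1 + sign 3 x + 2 * (stdRep 3 x).trace = if x = 1 then 6 else 0 := by
  rw [one_def]
  cases x with
  | r i =>
    have hsum := AddChar.sum_mulShift i (ZMod.isPrimitive_stdAddChar 3)
    rw [show (Finset.univ : Finset (ZMod 3)) = {0, 1, -1} from rfl, Finset.sum_insert (by decide),
      Finset.sum_pair (by decide)] at hsum
    simp only [zero_mul, one_mul, neg_mul, AddChar.map_zero_eq_one, ZMod.card] at hsum
    simp only [r.injEq, Matrix.trace_fin_two, sign_r, stdRep_r, Matrix.of_apply,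
      Matrix.cons_val', Matrix.cons_val_zero, Matrix.cons_val_one, Matrix.empty_val',
      Matrix.cons_val_fin_one]
    split_ifs at hsum ⊢ <;> push_cast at hsum <;> linear_combination 2 * hsum
  | sr i => simp [Matrix.trace_fin_two, -r_zero]

end DihedralGroup

theorem bsub_cubicDiag_eq_iff (m : Matrix (Fin 2) (Fin 2) ℂ) :
    bsub m cubicDiag = cubicDiag ↔
      ∀ x y : ℂ, (m 0 0 * x + m 0 1 * y) ^ 3 + (m 1 0 * x + m 1 1 * y) ^ 3 = x ^ 3 + y ^ 3 := by
  rw [bsub, cubicDiag, MvPolynomial.funext_iff]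
  exact ⟨fun h x y ↦ by simpa using h ![x, y], fun h v ↦ by simpa using h (v 0) (v 1)⟩

theorem eq_zero_or_eq_zero_of_cube_stable {a b c d : ℂ} (hdet : a * d - b * c ≠ 0)
    (H : ∀ x y : ℂ, (a * x + b * y) ^ 3 + (c * x + d * y) ^ 3 = x ^ 3 + y ^ 3) :
    (b = 0 ∧ c = 0 ∧ a ^ 3 = 1 ∧ d ^ 3 = 1) ∨ (a = 0 ∧ d = 0 ∧ b ^ 3 = 1 ∧ c ^ 3 = 1) := by
  have E1 : a ^ 3 + c ^ 3 = 1 := by linear_combination H 1 0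
  have E2 : b ^ 3 + d ^ 3 = 1 := by linear_combination H 0 1
  have E3 : a ^ 2 * b + c ^ 2 * d = 0 := by
    linear_combination (H 1 1 - H 1 (-1)) / 6 - E2 / 3
  have E4 : a * b ^ 2 + c * d ^ 2 = 0 := by
    linear_combination (H 1 1 + H 1 (-1)) / 6 - E1 / 3
  have habcd : a * b * c * d = 0 := by
    have : a * b * c * d * (a * d - b * c) = 0 := by
      linear_combination c * d ^ 2 * E3 - c ^ 2 * d * E4
    simpa [hdet] using this
  simp only [mul_eq_zero] at habcd
  rcases habcd with ((rfl | rfl) | rfl) | rfl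
  · have hc : c ≠ 0 := by rintro rfl; norm_num at E1
    obtain rfl : d = 0 := by simpa [hc] using E3
    exact Or.inr ⟨rfl, rfl, by linear_combination E2, by linear_combination E1⟩
  · have hd : d ≠ 0 := by rintro rfl; norm_num at E2
    obtain rfl : c = 0 := by simpa [hd] using E3
    exact Or.inl ⟨rfl, rfl, by linear_combination E1, by linear_combination E2⟩
  · have ha : a ≠ 0 := by rintro rfl; norm_num at E1
    obtain rfl : b = 0 := by simpa [ha] using E3
    exact Or.inl ⟨rfl, rfl, by linear_combination E1, by linear_combination E2⟩
  · have hb : b ≠ 0 := by rintro rfl; norm_num at E2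
    obtain rfl : a = 0 := by simpa [hb] using E4
    exact Or.inr ⟨rfl, rfl, by linear_combination E2, by linear_combination E1⟩

theorem mem_Gamma_iff (g : GL (Fin 2) ℂ) :
    g ∈ Gamma ↔ (g.val 0 1 = 0 ∧ g.val 1 0 = 0 ∧ g.val 0 0 ^ 3 = 1 ∧ g.val 1 1 ^ 3 = 1) ∨
      (g.val 0 0 = 0 ∧ g.val 1 1 = 0 ∧ g.val 0 1 ^ 3 = 1 ∧ g.val 1 0 ^ 3 = 1) := by
  change bsub g.val cubicDiag = cubicDiag ↔ _
  rw [bsub_cubicDiag_eq_iff]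
  refine ⟨eq_zero_or_eq_zero_of_cube_stable ?_, ?_⟩
  · rw [← Matrix.det_fin_two]
    exact g.isUnit.map Matrix.detMonoidHom |>.ne_zero
  · rintro (⟨h01, h10, h00, h11⟩ | ⟨h00, h11, h01, h10⟩) x y
    · simp only [h01, h10]; linear_combination x ^ 3 * h00 + y ^ 3 * h11
    · simp only [h00, h11]; linear_combination y ^ 3 * h01 + x ^ 3 * h10

abbrev Z3D3 := Multiplicative (ZMod 3) × DihedralGroup 3

namespace Z3D3

open DihedralGroup ZMod

noncomputable def toMatrix : Z3D3 →* Matrix (Fin 2) (Fin 2) ℂ :=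
  stdAddChar.toMonoidHom.smulProd (stdRep 3)

theorem toMatrix_mem_Gamma (p : Z3D3) : toMatrix.toHomUnits p ∈ Gamma := by
  rw [mem_Gamma_iff]
  obtain ⟨c, i | i⟩ := p <;> simp [toMatrix, mul_pow, stdAddChar_pow_eq_one]

noncomputable def toGamma : Z3D3 →* Gamma :=
  toMatrix.toHomUnits.codRestrict Gamma toMatrix_mem_Gamma

theorem toGamma_injective : Function.Injective toGamma := by
  refine (injective_iff_map_eq_one toGamma).mpr fun ⟨c, x⟩ hp ↦ ?_
  have hm : toMatrix (c, x) = 1 := congrArg (fun g : Gamma ↦ (g : GL (Fin 2) ℂ).val) hp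
  have h00 := congrFun (congrFun hm 0) 0
  cases x with
  | r i =>
    have h11 := congrFun (congrFun hm 1) 1
    simp only [toMatrix, MonoidHom.smulProd_apply, AddChar.toMonoidHom_apply, stdRep_r,
      Matrix.smul_apply, Matrix.of_apply, Matrix.cons_val', Matrix.cons_val_zero,
      Matrix.cons_val_one, Matrix.empty_val', Matrix.cons_val_fin_one, Matrix.one_apply_eq,
      smul_eq_mul, ← AddChar.map_add_eq_mul,
      injective_stdAddChar.eq_iff' (AddChar.map_zero_eq_one _)] at h00 h11
    have solve : ∀ c i : ZMod 3, c + i = 0 → c + -i = 0 → c = 0 ∧ i = 0 := by decide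
    obtain ⟨rfl, rfl⟩ := solve _ i h00 h11
    rfl
  | sr i => simp [toMatrix] at h00

theorem toGamma_surjective : Function.Surjective toGamma := by
  rintro ⟨g, hg⟩
  have solve : ∀ u v : ZMod 3, ∃ c i : ZMod 3, c + i = u ∧ c + -i = v := by decide
  rw [mem_Gamma_iff] at hg
  rcases hg with ⟨h01, h10, h00, h11⟩ | ⟨h00, h11, h01, h10⟩
  · obtain ⟨u, hu⟩ := exists_stdAddChar_eq h00
    obtain ⟨v, hv⟩ := exists_stdAddChar_eq h11
    obtain ⟨c, i, rfl, rfl⟩ := solve u v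
    refine ⟨(.ofAdd c, r i), Subtype.ext <| Units.ext ?_⟩
    ext a b
    fin_cases a <;> fin_cases b <;>
      simp [toGamma, toMatrix, ← hu, ← hv, h01, h10, AddChar.map_add_eq_mul]
  · obtain ⟨u, hu⟩ := exists_stdAddChar_eq h10
    obtain ⟨v, hv⟩ := exists_stdAddChar_eq h01
    obtain ⟨c, i, rfl, rfl⟩ := solve u v
    refine ⟨(.ofAdd c, sr i), Subtype.ext <| Units.ext ?_⟩
    ext a b
    fin_cases a <;> fin_cases b <;>
      simp [toGamma, toMatrix, ← hu, ← hv, h00, h11, AddChar.map_add_eq_mul]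

noncomputable def mulEquivGamma : Z3D3 ≃* Gamma :=
  .ofBijective toGamma ⟨toGamma_injective, toGamma_surjective⟩

noncomputable def irreps :
    Z3D3 →* (ZMod 3 × Fin 2 → ℂ) × (ZMod 3 → Matrix (Fin 2) (Fin 2) ℂ) :=
  (MonoidHom.pi fun j ↦ (stdAddChar.mulShift j.1).toMonoidHom.smulProd (![1, sign 3] j.2)).prod
    (MonoidHom.pi fun a ↦ (stdAddChar.mulShift a).toMonoidHom.smulProd (stdRep 3))

noncomputable def normalizedTrace :
    ((ZMod 3 × Fin 2 → ℂ) × (ZMod 3 → Matrix (Fin 2) (Fin 2) ℂ)) →ₗ[ℂ] ℂ :=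
  (18 : ℂ)⁻¹ • ((∑ j, LinearMap.proj j) ∘ₗ LinearMap.fst ℂ _ _ +
    2 • (∑ a, Matrix.traceLinearMap (Fin 2) ℂ ℂ ∘ₗ LinearMap.proj a) ∘ₗ LinearMap.snd ℂ _ _)

theorem normalizedTrace_irreps (c : Multiplicative (ZMod 3)) (x : DihedralGroup 3) :
    normalizedTrace (irreps (c, x)) =
      (18 : ℂ)⁻¹ * ((∑ a : ZMod 3, stdAddChar (a * c.toAdd)) *
        (1 + sign 3 x + 2 * (stdRep 3 x).trace)) := by
  simp [normalizedTrace, irreps, Fintype.sum_prod_type, Fin.sum_univ_two, Finset.mul_sum,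
    ← Finset.sum_add_distrib, mul_add, add_mul, mul_assoc, mul_comm, mul_left_comm]

theorem normalizedTrace_irreps_eq_ite (p : Z3D3) :
    normalizedTrace (irreps p) = if p = 1 then 1 else 0 := by
  obtain ⟨c, x⟩ := p
  rw [normalizedTrace_irreps, AddChar.sum_mulShift _ (isPrimitive_stdAddChar 3),
    one_add_sign_add_two_mul_trace_stdRep]
  simp only [Prod.mk_eq_one, toAdd_eq_zero, ZMod.card]
  by_cases hc : c = 1 <;> by_cases hx : x = 1 <;> norm_num [hc, hx]

theorem finrank_irreps_codomain :
    Module.finrank ℂ ((ZMod 3 × Fin 2 → ℂ) × (ZMod 3 → Matrix (Fin 2) (Fin 2) ℂ)) =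
      Fintype.card Z3D3 := by
  simp [Module.finrank_prod, Module.finrank_pi_fintype, Module.finrank_matrix, ZMod.card,
    DihedralGroup.card]

theorem nonempty_algEquiv :
    Nonempty (MonoidAlgebra ℂ Z3D3 ≃ₐ[ℂ]
      (ZMod 3 × Fin 2 → ℂ) × (ZMod 3 → Matrix (Fin 2) (Fin 2) ℂ)) :=
  MonoidAlgebra.nonempty_algEquiv_of_dual irreps normalizedTrace
    (by simpa using normalizedTrace_irreps_eq_ite 1)
    (fun p hp ↦ by simpa [hp] using normalizedTrace_irreps_eq_ite p) finrank_irreps_codomain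

end Z3D3

/-- **The complex group algebra of `Γ`** is isomorphic to `ℂ⁶ × M₂(ℂ)³`:
`Γ` has six 1-dimensional and three 2-dimensional irreducible representations. -/
theorem gamma_group_algebra :
    Nonempty (MonoidAlgebra ℂ Gamma ≃ₐ[ℂ]
      (Fin 6 → ℂ) × (Fin 3 → Matrix (Fin 2) (Fin 2) ℂ)) := by
  obtain ⟨e⟩ := Z3D3.nonempty_algEquiv
  let e₁ : ZMod 3 × Fin 2 ≃ Fin 6 := Fintype.equivOfCardEq (by simp [ZMod.card])
  let e₂ : ZMod 3 ≃ Fin 3 := Fintype.equivOfCardEq (by simp [ZMod.card])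
  exact ⟨(MonoidAlgebra.domCongr ℂ ℂ Z3D3.mulEquivGamma.symm).trans <| e.trans <|
    (AlgEquiv.piCongrLeft ℂ (fun _ ↦ ℂ) e₁).prodCongr
      (AlgEquiv.piCongrLeft ℂ (fun _ ↦ Matrix (Fin 2) (Fin 2) ℂ) e₂)⟩
end

section
/- Let f ∈ ℂ[x₁,…,x₆] be homogeneous of degree 3 such that the only common zero in ℂ⁶ of its partial derivatives is the origin, let f̂ be the unique symmetric trilinear form on ℂ⁶ with f̂(x,x,x) = f(x), and let W be the polynomial in the 16 variables (Φ₁ ∈ ℂ⁶, Φ₂ ∈ ℂ⁶, a₀,a₁,a₂,a₃ ∈ ℂ) given by W = Σ_{j=0}^{3} aⱼ · f̂(Φ₁,…,Φ₁,Φ₂,…,Φ₂) with 3−j arguments equal to Φ₁ and j arguments equal to Φ₂. Suppose all 16 partial derivatives of W vanish at a point (Φ₁,Φ₂,a), that the binary cubic ψ = Σⱼ aⱼ t₁^{3−j}t₂^{j} has at least two pairwise non-proportional linear factors, and that there is no linear form l = c₁t₁ + c₂t₂ with l² dividing ψ and c₁Φ₁ + c₂Φ₂ = 0. Then Φ₁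 = Φ₂ = 0 and ψ factors into three pairwise non-proportional linear forms. (Hence the critical locus of W on X₊ is entirely contained in the open substack X₊° where ψ has distinct roots, and consists of the single point Φ = 0.) -/
open MvPolynomial

/-!
Differentiating `W` in the `Φ`-directions gives, for every `y`, the two linear equations
`3a₀F(Φ₁,Φ₁,y) + 2a₁F(Φ₁,Φ₂,y) + a₂F(Φ₂,Φ₂,y) = 0` and
`a₁F(Φ₁,Φ₁,y) + 2a₂F(Φ₁,Φ₂,y) + 3a₃F(Φ₂,Φ₂,y) = 0`. Their solutions are proportional to the
coefficients of the Hessian of `ψ`. Hence, if the Hessian is not identically zero and vanishes at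
the root of a linear form `w₀t₁ + w₁t₂`, then `x = w₀Φ₁ + w₁Φ₂` satisfies `F(x,x,·) = 0`, i.e.
`∇f(x) = 0`, so `x = 0` by smoothness.

If `ψ` had a repeated factor `l²`, its Hessian would be a nonzero multiple of `l²`, so `l` would
kill `Φ`, contradicting semistability; hence `ψ` has three distinct roots. Then the Hessian has
discriminant `-3 (δ₁₂δ₁₃δ₂₃)² ≠ 0` (the `δ`s being the determinants of pairs of roots), so it
has two independent roots, whose linear forms both kill `Φ`.
-/

section LinearAlgebra

variable {K V : Type*} [Field K] [AddCommGroup V] [Module K V]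

theorem linearIndependent_pair_iff_det_ne_zero (c d : Fin 2 → K) :
    LinearIndependent K ![c, d] ↔ c 0 * d 1 - c 1 * d 0 ≠ 0 := by
  rw [show ![c, d] = (Matrix.of ![c, d]).row from rfl, Matrix.linearIndependent_rows_iff_isUnit,
    Matrix.isUnit_iff_isUnit_det, isUnit_iff_ne_zero, Matrix.det_fin_two]
  simp

theorem eq_zero_of_linearIndependent_of_smul_add_smul_eq_zero {c d : Fin 2 → K}
    (hcd : LinearIndependent K ![c, d]) {x y : V} (hc : c 0 • x + c 1 • y = 0)
    (hd : d 0 • x + d 1 • y = 0) : x = 0 ∧ y = 0 := by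
  have hδ := (linearIndependent_pair_iff_det_ne_zero c d).1 hcd
  have hx : (c 0 * d 1 - c 1 * d 0) • x = 0 := by
    linear_combination (norm := module) d 1 • hc - c 1 • hd
  have hy : (c 0 * d 1 - c 1 * d 0) • y = 0 := by
    linear_combination (norm := module) c 0 • hd - d 0 • hc
  exact ⟨(smul_eq_zero.1 hx).resolve_left hδ, (smul_eq_zero.1 hy).resolve_left hδ⟩

theorem exists_linearIndependent_zeros_of_discrim_ne_zero [IsAlgClosed K] [NeZero (2 : K)]
    {A B C : K} (h : discrim A B C ≠ 0) :
    ∃ u v : Fin 2 → K, LinearIndependent K ![u, v] ∧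
      A * u 0 ^ 2 + B * u 0 * u 1 + C * u 1 ^ 2 = 0 ∧
      A * v 0 ^ 2 + B * v 0 * v 1 + C * v 1 ^ 2 = 0 := by
  by_cases hA : A = 0
  · have hB : B ≠ 0 := by rintro rfl; simp [discrim, hA] at h
    refine ⟨![1, 0], ![-C, B], ?_, by simp [hA], ?_⟩
    · simpa [linearIndependent_pair_iff_det_ne_zero] using hB
    · simp only [Matrix.cons_val_zero, Matrix.cons_val_one, hA]
      ring
  · obtain ⟨s, hs⟩ := IsAlgClosed.exists_eq_mul_self (discrim A B C)
    have hs0 : s ≠ 0 := by rintro rfl; exact h (by simpa using hs)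
    rw [discrim] at hs
    refine ⟨![-B + s, 2 * A], ![-B - s, 2 * A], ?_, ?_, ?_⟩
    · have h4 : (4 : K) ≠ 0 := by
        rw [show (4 : K) = 2 * 2 by norm_num]
        exact mul_ne_zero two_ne_zero two_ne_zero
      rw [linearIndependent_pair_iff_det_ne_zero]
      convert mul_ne_zero (mul_ne_zero h4 hA) hs0 using 1
      simp only [Matrix.cons_val_zero, Matrix.cons_val_one]
      ring
    all_goals
      simp only [Matrix.cons_val_zero, Matrix.cons_val_one]
      linear_combination (-A) * hs

end LinearAlgebra

section BinaryCubic

variable {K : Type*} [Field K]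

noncomputable def linearForm (c : Fin 2 → K) : MvPolynomial (Fin 2) K :=
  C (c 0) * X 0 + C (c 1) * X 1

noncomputable def binaryCubic (a : Fin 4 → K) : MvPolynomial (Fin 2) K :=
  C (a 0) * X 0 ^ 3 + C (a 1) * X 0 ^ 2 * X 1 + C (a 2) * X 0 * X 1 ^ 2 + C (a 3) * X 1 ^ 3

def productCoeffs (c d e : Fin 2 → K) : Fin 4 → K :=
  ![c 0 * d 0 * e 0, c 0 * d 0 * e 1 + c 0 * d 1 * e 0 + c 1 * d 0 * e 0,
    c 0 * d 1 * e 1 + c 1 * d 0 * e 1 + c 1 * d 1 * e 0, c 1 * d 1 * e 1]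

/-- A quarter of the Hessian `ψ₁₁ ψ₂₂ - ψ₁₂²` of `ψ = binaryCubic a`, evaluated at the zero
`(w 1, -w 0)` of `linearForm w`. -/
def dualHessian (a : Fin 4 → K) (w : Fin 2 → K) : K :=
  (3 * a 1 * a 3 - a 2 ^ 2) * w 0 ^ 2 + (a 1 * a 2 - 9 * a 0 * a 3) * w 0 * w 1
    + (3 * a 0 * a 2 - a 1 ^ 2) * w 1 ^ 2

@[simp]
theorem eval_linearForm (c x : Fin 2 → K) : eval x (linearForm c) = c 0 * x 0 + c 1 * x 1 := by
  simp [linearForm]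

@[simp]
theorem eval_binaryCubic (a : Fin 4 → K) (x : Fin 2 → K) :
    eval x (binaryCubic a) =
      a 0 * x 0 ^ 3 + a 1 * x 0 ^ 2 * x 1 + a 2 * x 0 * x 1 ^ 2 + a 3 * x 1 ^ 3 := by
  simp [binaryCubic]

theorem linearForm_smul (κ : K) (c : Fin 2 → K) : linearForm (κ • c) = C κ * linearForm c := by
  simp only [linearForm, Pi.smul_apply, smul_eq_mul, map_mul]
  ring

theorem binaryCubic_productCoeffs (c d e : Fin 2 → K) :
    binaryCubic (productCoeffs c d e) = linearForm c * linearForm d * linearForm e := by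
  simp only [binaryCubic, productCoeffs, linearForm, Matrix.cons_val, map_add, map_mul]
  ring

theorem binaryCubic_injective [NeZero (2 : K)] :
    Function.Injective (binaryCubic : (Fin 4 → K) → MvPolynomial (Fin 2) K) := by
  intro a b h
  have hev (s t : K) := congrArg (eval ![s, t]) h
  simp only [eval_binaryCubic, Matrix.cons_val_zero, Matrix.cons_val_one] at hev
  have h2 : (2 : K) ≠ 0 := two_ne_zero
  funext i
  fin_cases i <;> simp only [Fin.reduceFinMk]
  · linear_combination hev 1 0
  · refine mul_left_cancel₀ h2 ?_
    linear_combination hev 1 1 - hev 1 (-1) - 2 * hev 0 1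
  · refine mul_left_cancel₀ h2 ?_
    linear_combination hev 1 1 + hev 1 (-1) - 2 * hev 1 0
  · linear_combination hev 0 1

theorem eq_productCoeffs_of_binaryCubic_eq_mul [NeZero (2 : K)] {a : Fin 4 → K}
    {c d e : Fin 2 → K} (h : binaryCubic a = linearForm c * linearForm d * linearForm e) :
    a = productCoeffs c d e :=
  binaryCubic_injective (h.trans (binaryCubic_productCoeffs c d e).symm)

theorem eval_binaryCubic_eq_zero_of_linearForm_dvd {a : Fin 4 → K} {c : Fin 2 → K}
    (h : linearForm c ∣ binaryCubic a) : eval ![c 1, -c 0] (binaryCubic a) = 0 := by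
  obtain ⟨g, hg⟩ := h
  rw [hg, map_mul, eval_linearForm]
  simp only [Matrix.cons_val_zero, Matrix.cons_val_one]
  ring

theorem exists_binaryCubic_eq_mul [Infinite K] {a : Fin 4 → K} {c d : Fin 2 → K}
    (hcd : LinearIndependent K ![c, d]) (hc : linearForm c ∣ binaryCubic a)
    (hd : linearForm d ∣ binaryCubic a) :
    ∃ e, binaryCubic a = linearForm c * linearForm d * linearForm e := by
  have hδ := (linearIndependent_pair_iff_det_ne_zero c d).1 hcd
  have hRc := eval_binaryCubic_eq_zero_of_linearForm_dvd hc
  have hRd := eval_binaryCubic_eq_zero_of_linearForm_dvd hd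
  simp only [eval_binaryCubic, Matrix.cons_val_zero, Matrix.cons_val_one] at hRc hRd
  -- In the coordinates `u = linearForm c`, `w = linearForm d` the cubic is `u w (g₁ u + g₂ w)`;
  -- going back to `t₁, t₂`, the third factor `g₁ c + g₂ d` becomes `δ⁻³ (b₁ c + b₂ d)`.
  set b₁ := 3 * a 3 * c 0 * d 0 ^ 2 - a 2 * c 1 * d 0 ^ 2 - 2 * a 2 * c 0 * d 0 * d 1
    + 2 * a 1 * c 1 * d 0 * d 1 + a 1 * c 0 * d 1 ^ 2 - 3 * a 0 * c 1 * d 1 ^ 2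
  set b₂ := -3 * a 3 * c 0 ^ 2 * d 0 + 2 * a 2 * c 0 * c 1 * d 0 + a 2 * c 0 ^ 2 * d 1
    - a 1 * c 1 ^ 2 * d 0 - 2 * a 1 * c 0 * c 1 * d 1 + 3 * a 0 * c 1 ^ 2 * d 1
  refine ⟨(c 0 * d 1 - c 1 * d 0)⁻¹ ^ 3 • (b₁ • c + b₂ • d), MvPolynomial.funext fun x => ?_⟩
  simp only [eval_binaryCubic, map_mul, eval_linearForm, Pi.smul_apply, Pi.add_apply, smul_eq_mul]
  field_simp
  linear_combination (c 0 * x 0 + c 1 * x 1) ^ 3 * hRd - (d 0 * x 0 + d 1 * x 1) ^ 3 * hRc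

theorem exists_eq_sq_mul_of_not_linearIndependent {c d e : Fin 2 → K}
    (hcd : LinearIndependent K ![c, d]) (hce : ¬ LinearIndependent K ![c, e])
    (hne : linearForm c * linearForm d * linearForm e ≠ 0) :
    ∃ d', linearForm c * linearForm d * linearForm e = linearForm c ^ 2 * linearForm d' ∧
      LinearIndependent K ![c, d'] := by
  have hc : c ≠ 0 := hcd.ne_zero 0
  obtain ⟨κ, rfl⟩ : ∃ κ : K, κ • c = e := by
    simpa [LinearIndependent.pair_iff' hc] using hce
  have hκ : κ ≠ 0 := by rintro rfl; simp [linearForm] at hne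
  refine ⟨κ • d, by rw [linearForm_smul, linearForm_smul]; ring, ?_⟩
  rw [linearIndependent_pair_iff_det_ne_zero] at hcd ⊢
  convert mul_ne_zero hκ hcd using 1
  simp only [Pi.smul_apply, smul_eq_mul]
  ring

theorem dualHessian_productCoeffs_sq (c d w : Fin 2 → K) :
    dualHessian (productCoeffs c c d) w =
      -(c 0 * d 1 - c 1 * d 0) ^ 2 * (c 0 * w 1 - c 1 * w 0) ^ 2 := by
  simp only [dualHessian, productCoeffs, Matrix.cons_val]
  ring

theorem discrim_dualHessian_productCoeffs {a : Fin 4 → K} {c d e : Fin 2 → K}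
    (ha : a = productCoeffs c d e) :
    discrim (3 * a 1 * a 3 - a 2 ^ 2) (a 1 * a 2 - 9 * a 0 * a 3) (3 * a 0 * a 2 - a 1 ^ 2) =
      -3 * ((c 0 * d 1 - c 1 * d 0) * (c 0 * e 1 - c 1 * e 0) * (d 0 * e 1 - d 1 * e 0)) ^ 2 := by
  subst ha
  simp only [discrim, productCoeffs, Matrix.cons_val]
  ring

/-- `(p, q, r)` is annihilated by the rows `(3a₀, 2a₁, a₂)` and `(a₁, 2a₂, 3a₃)`, whose cross
product is `(2A, B, 2C)` for the coefficients `A, B, C` of `dualHessian a`. So `(p, q, r)` is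
proportional to `(2A, B, 2C)`, and the claimed quadratic is proportional to `dualHessian a w`. -/
theorem quadratic_eq_zero_of_dualHessian_eq_zero {a : Fin 4 → K} {p q r : K}
    (h₁ : 3 * a 0 * p + 2 * a 1 * q + a 2 * r = 0)
    (h₂ : a 1 * p + 2 * a 2 * q + 3 * a 3 * r = 0) (hH : dualHessian a ≠ 0) {w : Fin 2 → K}
    (hw : dualHessian a w = 0) : w 0 ^ 2 * p + 2 * w 0 * w 1 * q + w 1 ^ 2 * r = 0 := by
  have hABC : 3 * a 1 * a 3 - a 2 ^ 2 ≠ 0 ∨ a 1 * a 2 - 9 * a 0 * a 3 ≠ 0 ∨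
      3 * a 0 * a 2 - a 1 ^ 2 ≠ 0 := by
    by_contra! h
    exact hH (funext fun w => by simp [dualHessian, h.1, h.2.1, h.2.2])
  unfold dualHessian at hw
  have I₁ : (a 1 * a 2 - 9 * a 0 * a 3) * p - 2 * (3 * a 1 * a 3 - a 2 ^ 2) * q = 0 := by
    linear_combination a 2 * h₂ - 3 * a 3 * h₁
  have I₂ : 2 * (3 * a 0 * a 2 - a 1 ^ 2) * q - (a 1 * a 2 - 9 * a 0 * a 3) * r = 0 := by
    linear_combination 3 * a 0 * h₂ - a 1 * h₁
  have I₃ : (3 * a 1 * a 3 - a 2 ^ 2) * r - (3 * a 0 * a 2 - a 1 ^ 2) * p = 0 := by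
    linear_combination a 1 * h₂ - a 2 * h₁
  rcases hABC with h | h | h
  · refine (mul_right_inj' h).1 ?_
    linear_combination p * hw - w 0 * w 1 * I₁ + w 1 ^ 2 * I₃
  · refine (mul_right_inj' h).1 ?_
    linear_combination 2 * q * hw + w 0 ^ 2 * I₁ - w 1 ^ 2 * I₂
  · refine (mul_right_inj' h).1 ?_
    linear_combination r * hw - w 0 ^ 2 * I₃ + w 0 * w 1 * I₂

theorem dualHessian_ne_zero_of_discrim_ne_zero {a : Fin 4 → K}
    (h : discrim (3 * a 1 * a 3 - a 2 ^ 2) (a 1 * a 2 - 9 * a 0 * a 3)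
      (3 * a 0 * a 2 - a 1 ^ 2) ≠ 0) :
    dualHessian a ≠ 0 := by
  intro hH
  have hev (s t : K) := congrFun hH ![s, t]
  simp only [dualHessian, Matrix.cons_val_zero, Matrix.cons_val_one, Pi.zero_apply] at hev
  apply h
  unfold discrim
  linear_combination (a 1 * a 2 - 9 * a 0 * a 3) * hev 1 1
    - (a 1 * a 2 - 9 * a 0 * a 3 + 4 * (3 * a 0 * a 2 - a 1 ^ 2)) * hev 1 0
    - (a 1 * a 2 - 9 * a 0 * a 3) * hev 0 1

theorem dualHessian_ne_zero_and_eq_zero_of_eq_sq_mul [NeZero (2 : K)] {a : Fin 4 → K}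
    {c d : Fin 2 → K} (h : binaryCubic a = linearForm c ^ 2 * linearForm d)
    (hcd : LinearIndependent K ![c, d]) : dualHessian a ≠ 0 ∧ dualHessian a c = 0 := by
  obtain rfl :=
    eq_productCoeffs_of_binaryCubic_eq_mul (c := c) (d := c) (e := d) (h.trans (by ring))
  have hδ := (linearIndependent_pair_iff_det_ne_zero c d).1 hcd
  refine ⟨fun h0 => ?_, by rw [dualHessian_productCoeffs_sq]; ring⟩
  have hd := congrFun h0 d
  rw [dualHessian_productCoeffs_sq, Pi.zero_apply] at hd
  simp [hδ] at hd

theorem exists_linearIndependent_dualHessian_eq_zero [IsAlgClosed K] [CharZero K]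
    {a : Fin 4 → K} {c d e : Fin 2 → K}
    (h : binaryCubic a = linearForm c * linearForm d * linearForm e)
    (hcd : LinearIndependent K ![c, d]) (hce : LinearIndependent K ![c, e])
    (hde : LinearIndependent K ![d, e]) :
    dualHessian a ≠ 0 ∧ ∃ u v : Fin 2 → K, LinearIndependent K ![u, v] ∧
      dualHessian a u = 0 ∧ dualHessian a v = 0 := by
  simp only [linearIndependent_pair_iff_det_ne_zero] at hcd hce hde
  have hne := ne_of_eq_of_ne
    (discrim_dualHessian_productCoeffs (eq_productCoeffs_of_binaryCubic_eq_mul h))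
    (mul_ne_zero (by norm_num) (pow_ne_zero _ (mul_ne_zero (mul_ne_zero hcd hce) hde)))
  exact ⟨dualHessian_ne_zero_of_discrim_ne_zero hne,
    exists_linearIndependent_zeros_of_discrim_ne_zero hne⟩

end BinaryCubic

theorem hasDerivAt_cubic_zero {𝕜 : Type*} [NontriviallyNormedField 𝕜] (k₀ k₁ k₂ k₃ : 𝕜) :
    HasDerivAt (fun s : 𝕜 => k₀ + k₁ * s + k₂ * s ^ 2 + k₃ * s ^ 3) k₁ 0 := by
  simpa using ((((hasDerivAt_id (0 : 𝕜)).const_mul k₁).const_add k₀).fun_add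
    ((hasDerivAt_pow 2 (0 : 𝕜)).const_mul k₂)).fun_add ((hasDerivAt_pow 3 (0 : 𝕜)).const_mul k₃)

theorem MvPolynomial.hasDerivAt_eval_add_smul {𝕜 σ : Type*} [NontriviallyNormedField 𝕜]
    [Fintype σ] [DecidableEq σ] (p : MvPolynomial σ 𝕜) (x y : σ → 𝕜) :
    HasDerivAt (fun s : 𝕜 => eval (x + s • y) p) (∑ v, y v * eval x (pderiv v p)) 0 := by
  induction p using MvPolynomial.induction_on with
  | C a => simpa using hasDerivAt_const (0 : 𝕜) a
  | add p q hp hq => simpa only [map_add, mul_add, Finset.sum_add_distrib] using hp.fun_add hq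
  | mul_X p i hp =>
    have hXi : HasDerivAt (fun s : 𝕜 => x i + s * y i) (y i) 0 := by
      simpa using ((hasDerivAt_id (0 : 𝕜)).mul_const (y i)).const_add (x i)
    have hfun : (fun s : 𝕜 => eval (x + s • y) (p * X i))
        = fun s => eval (x + s • y) p * (x i + s * y i) := by
      funext s; simp
    rw [hfun]
    refine (hp.fun_mul hXi).congr_deriv ?_
    symm
    simp only [zero_mul, add_zero, zero_smul, Derivation.leibniz, pderiv_X, Pi.single_apply,
      apply_ite (eval x), map_zero, smul_eq_mul, map_add, map_mul, eval_X, mul_add, mul_ite,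
      mul_one, mul_zero, Finset.sum_add_distrib, Finset.sum_ite_eq, Finset.mem_univ, if_true,
      Finset.sum_mul]
    rw [add_comm]
    congr 1
    · exact Finset.sum_congr rfl fun v _ => by ring
    · ring

structure IsSymmTrilinear {K V : Type*} [CommRing K] [AddCommGroup V] [Module K V]
    (F : V → V → V → K) : Prop where
  swap12 : ∀ x y z, F x y z = F y x z
  swap23 : ∀ x y z, F x y z = F x z y
  add_left : ∀ x x' y z, F (x + x') y z = F x y z + F x' y z
  smul_left : ∀ (c : K) x y z, F (c • x) y z = c * F x y z

def superpotential {K V : Type*} [CommRing K] (F : V → V → V → K) (P₁ P₂ : V) (b : Fin 4 → K) :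
    K :=
  b 0 * F P₁ P₁ P₁ + b 1 * F P₁ P₁ P₂ + b 2 * F P₁ P₂ P₂ + b 3 * F P₂ P₂ P₂

namespace IsSymmTrilinear

section CommRing

variable {K V : Type*} [CommRing K] [AddCommGroup V] [Module K V] {F : V → V → V → K}
  (hF : IsSymmTrilinear F)
include hF

theorem add_mid (x y y' z : V) : F x (y + y') z = F x y z + F x y' z := by
  rw [hF.swap12, hF.add_left, hF.swap12 y, hF.swap12 y']

theorem smul_mid (c : K) (x y z : V) : F x (c • y) z = c * F x y z := by
  rw [hF.swap12, hF.smul_left, hF.swap12 y]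

theorem add_right (x y z z' : V) : F x y (z + z') = F x y z + F x y z' := by
  rw [hF.swap23, hF.add_mid, hF.swap23 x z, hF.swap23 x z']

theorem smul_right (c : K) (x y z : V) : F x y (c • z) = c * F x y z := by
  rw [hF.swap23, hF.smul_mid, hF.swap23 x z]

theorem swap13 (x y z : V) : F x y z = F z y x := by
  rw [hF.swap12, hF.swap23, hF.swap12]

theorem zero_right (x y : V) : F x y 0 = 0 := by
  simpa using hF.smul_right 0 x y 0

theorem smul_add_smul_self (α β : K) (p q z : V) :
    F (α • p + β • q) (α • p + β • q) z =
      α ^ 2 * F p p z + 2 * α * β * F p q z + β ^ 2 * F q q z := by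
  simp only [hF.add_left, hF.smul_left, hF.add_mid, hF.smul_mid, hF.swap12 q p]
  ring

end CommRing

section Analysis

variable {𝕜 V : Type*} [NontriviallyNormedField 𝕜] [AddCommGroup V] [Module 𝕜 V]
  {F : V → V → V → 𝕜} (hF : IsSymmTrilinear F)
include hF

theorem hasDerivAt_add_smul (u v u' v' u'' v'' : V) :
    HasDerivAt (fun s : 𝕜 => F (u + s • v) (u' + s • v') (u'' + s • v''))
      (F v u' u'' + F u v' u'' + F u u' v'') 0 := by
  convert hasDerivAt_cubic_zero (F u u' u'') (F v u' u'' + F u v' u'' + F u u' v'')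
    (F v v' u'' + F v u' v'' + F u v' v'') (F v v' v'') using 1
  funext s
  simp only [hF.add_left, hF.smul_left, hF.add_mid, hF.smul_mid, hF.add_right, hF.smul_right]
  ring

theorem hasDerivAt_superpotential (Φ₁ Φ₂ y₁ y₂ : V) (b : Fin 4 → 𝕜) :
    HasDerivAt (fun s : 𝕜 => superpotential F (Φ₁ + s • y₁) (Φ₂ + s • y₂) b)
      ((3 * b 0 * F Φ₁ Φ₁ y₁ + 2 * b 1 * F Φ₁ Φ₂ y₁ + b 2 * F Φ₂ Φ₂ y₁)
        + (b 1 * F Φ₁ Φ₁ y₂ + 2 * b 2 * F Φ₁ Φ₂ y₂ + 3 * b 3 * F Φ₂ Φ₂ y₂)) 0 := by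
  refine (((hF.hasDerivAt_add_smul Φ₁ y₁ Φ₁ y₁ Φ₁ y₁).const_mul (b 0)).fun_add
    ((hF.hasDerivAt_add_smul Φ₁ y₁ Φ₁ y₁ Φ₂ y₂).const_mul (b 1))).fun_add
    ((hF.hasDerivAt_add_smul Φ₁ y₁ Φ₂ y₂ Φ₂ y₂).const_mul (b 2)) |>.fun_add
    ((hF.hasDerivAt_add_smul Φ₂ y₂ Φ₂ y₂ Φ₂ y₂).const_mul (b 3)) |>.congr_deriv ?_
  rw [hF.swap13 y₁ Φ₁ Φ₁, hF.swap23 Φ₁ y₁ Φ₁, hF.swap13 y₁ Φ₁ Φ₂, hF.swap12 Φ₂ Φ₁,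
    hF.swap23 Φ₁ y₁ Φ₂, hF.swap13 y₁ Φ₂ Φ₂, hF.swap23 Φ₁ y₂ Φ₂, hF.swap13 y₂ Φ₂ Φ₂,
    hF.swap23 Φ₂ y₂ Φ₂]
  ring

end Analysis

section Polynomial

variable {𝕜 σ : Type*} [NontriviallyNormedField 𝕜] [Fintype σ] [DecidableEq σ]
  {F : (σ → 𝕜) → (σ → 𝕜) → (σ → 𝕜) → 𝕜} (hF : IsSymmTrilinear F)
include hF

theorem sum_mul_eval_pderiv {f : MvPolynomial σ 𝕜} (hdiag : ∀ x, F x x x = eval x f)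
    (x y : σ → 𝕜) : ∑ v, y v * eval x (pderiv v f) = 3 * F x x y := by
  have h := f.hasDerivAt_eval_add_smul x y
  simp only [← hdiag] at h
  refine h.unique ((hF.hasDerivAt_add_smul x y x y x y).congr_deriv ?_)
  rw [hF.swap13 y, hF.swap23 x y]
  ring

theorem eq_zero_of_forall_apply_eq_zero {f : MvPolynomial σ 𝕜} (hdiag : ∀ x, F x x x = eval x f)
    (hsm : ∀ x : σ → 𝕜, (∀ i, eval x (pderiv i f) = 0) → x = 0) {x : σ → 𝕜}
    (hx : ∀ y, F x x y = 0) : x = 0 :=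
  hsm x fun i => by
    simpa [hx, Pi.single_apply] using hF.sum_mul_eval_pderiv hdiag x (Pi.single i 1)

theorem critical_equations
    {W : MvPolynomial ((σ ⊕ σ) ⊕ Fin 4) 𝕜}
    (hW : ∀ (P₁ P₂ : σ → 𝕜) (b : Fin 4 → 𝕜),
      eval (Sum.elim (Sum.elim P₁ P₂) b) W = superpotential F P₁ P₂ b)
    {Φ₁ Φ₂ : σ → 𝕜} {a : Fin 4 → 𝕜}
    (hcrit : ∀ v, eval (Sum.elim (Sum.elim Φ₁ Φ₂) a) (pderiv v W) = 0) (y₁ y₂ : σ → 𝕜) :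
    (3 * a 0 * F Φ₁ Φ₁ y₁ + 2 * a 1 * F Φ₁ Φ₂ y₁ + a 2 * F Φ₂ Φ₂ y₁)
      + (a 1 * F Φ₁ Φ₁ y₂ + 2 * a 2 * F Φ₁ Φ₂ y₂ + 3 * a 3 * F Φ₂ Φ₂ y₂) = 0 := by
  have hline (s : 𝕜) : Sum.elim (Sum.elim Φ₁ Φ₂) a + s • Sum.elim (Sum.elim y₁ y₂) 0
      = Sum.elim (Sum.elim (Φ₁ + s • y₁) (Φ₂ + s • y₂)) a := by
    funext v
    rcases v with (v | v) | v <;> simp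
  have h :=
    W.hasDerivAt_eval_add_smul (Sum.elim (Sum.elim Φ₁ Φ₂) a) (Sum.elim (Sum.elim y₁ y₂) 0)
  simp only [hcrit, mul_zero, Finset.sum_const_zero, hline, hW] at h
  exact (hF.hasDerivAt_superpotential Φ₁ Φ₂ y₁ y₂ a).unique h

theorem smul_add_smul_eq_zero_of_dualHessian_eq_zero {f : MvPolynomial σ 𝕜}
    (hdiag : ∀ x, F x x x = eval x f)
    (hsm : ∀ x : σ → 𝕜, (∀ i, eval x (pderiv i f) = 0) → x = 0)
    {W : MvPolynomial ((σ ⊕ σ) ⊕ Fin 4) 𝕜}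
    (hW : ∀ (P₁ P₂ : σ → 𝕜) (b : Fin 4 → 𝕜),
      eval (Sum.elim (Sum.elim P₁ P₂) b) W = superpotential F P₁ P₂ b)
    {Φ₁ Φ₂ : σ → 𝕜} {a : Fin 4 → 𝕜}
    (hcrit : ∀ v, eval (Sum.elim (Sum.elim Φ₁ Φ₂) a) (pderiv v W) = 0)
    (hH : dualHessian a ≠ 0) {w : Fin 2 → 𝕜} (hw : dualHessian a w = 0) :
    w 0 • Φ₁ + w 1 • Φ₂ = 0 := by
  refine hF.eq_zero_of_forall_apply_eq_zero hdiag hsm fun y => ?_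
  rw [hF.smul_add_smul_self]
  refine quadratic_eq_zero_of_dualHessian_eq_zero ?_ ?_ hH hw
  · simpa [hF.zero_right] using hF.critical_equations hW hcrit y 0
  · simpa [hF.zero_right] using hF.critical_equations hW hcrit 0 y

end Polynomial

end IsSymmTrilinear

theorem critical_locus_on_X_plus_general
    (f : MvPolynomial (Fin 6) ℂ)
    (hsm : ∀ x : Fin 6 → ℂ, (∀ i, eval x (pderiv i f) = 0) → x = 0)
    (F : (Fin 6 → ℂ) → (Fin 6 → ℂ) → (Fin 6 → ℂ) → ℂ)
    (hF_swap12 : ∀ x y z, F x y z = F y x z)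
    (hF_swap23 : ∀ x y z, F x y z = F x z y)
    (hF_add : ∀ x x' y z, F (x + x') y z = F x y z + F x' y z)
    (hF_smul : ∀ (c : ℂ) (x y z : Fin 6 → ℂ), F (c • x) y z = c * F x y z)
    (hF_diag : ∀ x, F x x x = eval x f)
    (W : MvPolynomial ((Fin 6 ⊕ Fin 6) ⊕ Fin 4) ℂ)
    (hW : ∀ (P₁ P₂ : Fin 6 → ℂ) (b : Fin 4 → ℂ),
      eval (Sum.elim (Sum.elim P₁ P₂) b) W =
        b 0 * F P₁ P₁ P₁ + b 1 * F P₁ P₁ P₂ + b 2 * F P₁ P₂ P₂ + b 3 * F P₂ P₂ P₂)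
    (Φ₁ Φ₂ : Fin 6 → ℂ) (a : Fin 4 → ℂ)
    (hcrit : ∀ v, eval (Sum.elim (Sum.elim Φ₁ Φ₂) a) (pderiv v W) = 0)
    (ψ : MvPolynomial (Fin 2) ℂ)
    (hψ : ψ = C (a 0) * X 0 ^ 3 + C (a 1) * X 0 ^ 2 * X 1
      + C (a 2) * X 0 * X 1 ^ 2 + C (a 3) * X 1 ^ 3)
    (hψne : ψ ≠ 0)
    (htwo : ∃ c d : Fin 2 → ℂ, LinearIndependent ℂ ![c, d] ∧
      (C (c 0) * X 0 + C (c 1) * X 1) ∣ ψ ∧ (C (d 0) * X 0 + C (d 1) * X 1) ∣ ψ)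
    (hnodouble : ¬ ∃ c : Fin 2 → ℂ, c ≠ 0 ∧
      (C (c 0) * X 0 + C (c 1) * X 1) ^ 2 ∣ ψ ∧ c 0 • Φ₁ + c 1 • Φ₂ = 0) :
    Φ₁ = 0 ∧ Φ₂ = 0 ∧
      ∃ c d e : Fin 2 → ℂ,
        ψ = (C (c 0) * X 0 + C (c 1) * X 1) * (C (d 0) * X 0 + C (d 1) * X 1)
          * (C (e 0) * X 0 + C (e 1) * X 1) ∧
        LinearIndependent ℂ ![c, d] ∧ LinearIndependent ℂ ![c, e] ∧
        LinearIndependent ℂ ![d, e] := by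
  have hF : IsSymmTrilinear F := ⟨hF_swap12, hF_swap23, hF_add, hF_smul⟩
  have hkill (w : Fin 2 → ℂ) (hH : dualHessian a ≠ 0) (hw : dualHessian a w = 0) :
      w 0 • Φ₁ + w 1 • Φ₂ = 0 :=
    hF.smul_add_smul_eq_zero_of_dualHessian_eq_zero hF_diag hsm hW hcrit hH hw
  change ψ = binaryCubic a at hψ
  subst hψ
  obtain ⟨c, d, hcd, hc, hd⟩ := htwo
  obtain ⟨e, he⟩ := exists_binaryCubic_eq_mul hcd hc hd
  have hdistinct {c d e : Fin 2 → ℂ}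
      (he : binaryCubic a = linearForm c * linearForm d * linearForm e)
      (hcd : LinearIndependent ℂ ![c, d]) : LinearIndependent ℂ ![c, e] := by
    by_contra hce
    obtain ⟨d', hd', hcd'⟩ := exists_eq_sq_mul_of_not_linearIndependent hcd hce (he ▸ hψne)
    obtain ⟨hH, hc⟩ := dualHessian_ne_zero_and_eq_zero_of_eq_sq_mul (he.trans hd') hcd'
    exact hnodouble ⟨c, hcd.ne_zero 0, ⟨_, he.trans hd'⟩, hkill c hH hc⟩
  have hce := hdistinct he hcd
  have hde := hdistinct (c := d) (d := c) (e := e) (he.trans (by ring))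
    (LinearIndependent.pair_symm_iff.1 hcd)
  obtain ⟨hH, u, v, huv, hu, hv⟩ := exists_linearIndependent_dualHessian_eq_zero he hcd hce hde
  obtain ⟨hΦ₁, hΦ₂⟩ :=
    eq_zero_of_linearIndependent_of_smul_add_smul_eq_zero huv (hkill u hH hu) (hkill v hH hv)
  exact ⟨hΦ₁, hΦ₂, c, d, e, he, hcd, hce, hde⟩

/-- **Critical locus of the superpotential on `X₊`.** Let `f` be a homogeneous
cubic in six variables whose partials have no common zero but the origin, `F` its
polarization, and `W = Σⱼ aⱼ F(Φ₁,…,Φ₁,Φ₂,…,Φ₂)`. Suppose all 16 partial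
derivatives of `W` vanish at a point `(Φ₁, Φ₂, a)` which is semistable for the
positive stability condition: the binary cubic `ψ = Σⱼ aⱼ t₁^{3-j}t₂^j` is
nonzero with at least two non-proportional linear factors, and there is no
nonzero linear form `l = c₁t₁ + c₂t₂` with `l² ∣ ψ` and `c₁Φ₁ + c₂Φ₂ = 0`.
Then `Φ₁ = Φ₂ = 0` and `ψ` is a product of three pairwise non-proportional
linear forms. -/
theorem critical_locus_on_X_plus
    (f : MvPolynomial (Fin 6) ℂ) (hf3 : f.IsHomogeneous 3)
    (hsm : ∀ x : Fin 6 → ℂ, (∀ i, eval x (pderiv i f) = 0) → x = 0)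
    (F : (Fin 6 → ℂ) → (Fin 6 → ℂ) → (Fin 6 → ℂ) → ℂ)
    (hF_swap12 : ∀ x y z, F x y z = F y x z)
    (hF_swap23 : ∀ x y z, F x y z = F x z y)
    (hF_add : ∀ x x' y z, F (x + x') y z = F x y z + F x' y z)
    (hF_smul : ∀ (c : ℂ) (x y z : Fin 6 → ℂ), F (c • x) y z = c * F x y z)
    (hF_diag : ∀ x, F x x x = eval x f)
    (W : MvPolynomial ((Fin 6 ⊕ Fin 6) ⊕ Fin 4) ℂ)
    (hW : ∀ (P₁ P₂ : Fin 6 → ℂ) (b : Fin 4 → ℂ),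
      eval (Sum.elim (Sum.elim P₁ P₂) b) W =
        b 0 * F P₁ P₁ P₁ + b 1 * F P₁ P₁ P₂ + b 2 * F P₁ P₂ P₂ + b 3 * F P₂ P₂ P₂)
    (Φ₁ Φ₂ : Fin 6 → ℂ) (a : Fin 4 → ℂ)
    (hcrit : ∀ v, eval (Sum.elim (Sum.elim Φ₁ Φ₂) a) (pderiv v W) = 0)
    (ψ : MvPolynomial (Fin 2) ℂ)
    (hψ : ψ = C (a 0) * X 0 ^ 3 + C (a 1) * X 0 ^ 2 * X 1
      + C (a 2) * X 0 * X 1 ^ 2 + C (a 3) * X 1 ^ 3)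
    (hψne : ψ ≠ 0)
    (htwo : ∃ c d : Fin 2 → ℂ, LinearIndependent ℂ ![c, d] ∧
      (C (c 0) * X 0 + C (c 1) * X 1) ∣ ψ ∧ (C (d 0) * X 0 + C (d 1) * X 1) ∣ ψ)
    (hnodouble : ¬ ∃ c : Fin 2 → ℂ, c ≠ 0 ∧
      (C (c 0) * X 0 + C (c 1) * X 1) ^ 2 ∣ ψ ∧ c 0 • Φ₁ + c 1 • Φ₂ = 0) :
    Φ₁ = 0 ∧ Φ₂ = 0 ∧
      ∃ c d e : Fin 2 → ℂ,
        ψ = (C (c 0) * X 0 + C (c 1) * X 1) * (C (d 0) * X 0 + C (d 1) * X 1)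
          * (C (e 0) * X 0 + C (e 1) * X 1) ∧
        LinearIndependent ℂ ![c, d] ∧ LinearIndependent ℂ ![c, e] ∧
        LinearIndependent ℂ ![d, e] :=
  critical_locus_on_X_plus_general f hsm F hF_swap12 hF_swap23 hF_add hF_smul hF_diag W hW Φ₁ Φ₂ a
    hcrit ψ hψ hψne htwo hnodouble
end
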